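/- arXiv:1001.1450 — 2 statements merged into one kernel-verified Lean document; each statement's English description precedes it below -/
import Mathlib

section
/- In the beauty-contest equilibrium with professed beliefs α̃ⱼ = (1-pⱼ)αⱼ + pⱼS̃₀ and qⱼ = c·pⱼ(1-pⱼ) normalized so Σ qⱼ = 1 (hence S̃₀ = Σ qⱼαⱼ), it cannot be that (αⱼ - S₀)² < (α̃ⱼ - S̃₀)² + 2(α̃ⱼ - S̃₀)(αⱼ - α̃ⱼ) for every j, where S₀ = Σ pⱼαⱼ. That is, not every agent can strictly improve their objective by faking beliefs. -/
open Finset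

/-!
Whatever the professed belief `α̃ⱼ`, completing the square gives
`(α̃ⱼ - S̃₀)² + 2(α̃ⱼ - S̃₀)(αⱼ - α̃ⱼ) = (αⱼ - S̃₀)² - (αⱼ - α̃ⱼ)² ≤ (αⱼ - S̃₀)²`.
If every agent improved, averaging with the positive weights `qⱼ` would give
`Σ qⱼ(αⱼ - S₀)² < Σ qⱼ(αⱼ - S̃₀)²`, contradicting the fact that the `q`-weighted mean
`S̃₀ = Σ qⱼαⱼ` minimises the `q`-weighted mean squared deviation.
-/

lemma sq_add_two_mul_sub_le_sq (a b c : ℝ) :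
    (b - c) ^ 2 + 2 * (b - c) * (a - b) ≤ (a - c) ^ 2 := by
  nlinarith [sq_nonneg (a - b)]

section WeightedMean

variable {ι : Type*} {s : Finset ι} {w x : ι → ℝ}

lemma sum_div_sum_eq_one (hw : ∀ i ∈ s, 0 < w i) (hs : s.Nonempty) :
    ∑ i ∈ s, w i / ∑ j ∈ s, w j = 1 := by
  rw [← sum_div, div_self (sum_pos hw hs).ne']

lemma sum_mul_sq_sub_eq_sum_mul_sq_sub_mean_add (hw : ∑ i ∈ s, w i = 1) (c : ℝ) :
    ∑ i ∈ s, w i * (x i - c) ^ 2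
      = ∑ i ∈ s, w i * (x i - ∑ j ∈ s, w j * x j) ^ 2 + (∑ j ∈ s, w j * x j - c) ^ 2 := by
  set m := ∑ j ∈ s, w j * x j with hm
  have hpoint : ∀ i, w i * (x i - c) ^ 2
      = w i * (x i - m) ^ 2 + 2 * (m - c) * (w i * x i) + (c ^ 2 - m ^ 2) * w i :=
    fun i => by ring
  simp only [hpoint, sum_add_distrib, ← mul_sum, ← hm, hw]
  ring

lemma sum_mul_sq_sub_mean_le (hw : ∑ i ∈ s, w i = 1) (c : ℝ) :
    ∑ i ∈ s, w i * (x i - ∑ j ∈ s, w j * x j) ^ 2 ≤ ∑ i ∈ s, w i * (x i - c) ^ 2 := by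
  rw [sum_mul_sq_sub_eq_sum_mul_sq_sub_mean_add hw c]
  exact le_add_of_nonneg_right (sq_nonneg _)

end WeightedMean

theorem not_all_agents_improve_general
    (J : ℕ) (hJ : 2 ≤ J) (p α αtilde q : Fin J → ℝ)
    (hp : ∀ j, p j ∈ Set.Ioo (0:ℝ) 1)
    (hq : ∀ j, q j = p j * (1 - p j) / ∑ i, p i * (1 - p i))
    (Stilde S₀ : ℝ)
    (hStilde : Stilde = ∑ j, q j * α j) :
    ¬ ∀ j, (α j - S₀)^2
        < (αtilde j - Stilde)^2 + 2 * (αtilde j - Stilde) * (α j - αtilde j) := by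
  intro h
  have hne : (univ : Finset (Fin J)).Nonempty := ⟨⟨0, by omega⟩, mem_univ _⟩
  have hw : ∀ j ∈ univ, 0 < p j * (1 - p j) := fun j _ =>
    mul_pos (hp j).1 (sub_pos.2 (hp j).2)
  have hq_pos : ∀ j, 0 < q j := fun j => by
    rw [hq]; exact div_pos (hw j (mem_univ _)) (sum_pos hw hne)
  have hq_sum : ∑ j, q j = 1 := by
    simp only [hq]; exact sum_div_sum_eq_one hw hne
  have hlt := sum_lt_sum_of_nonempty hne fun j _ => mul_lt_mul_of_pos_left (h j) (hq_pos j)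
  have hle : ∑ j, q j * ((αtilde j - Stilde)^2 + 2 * (αtilde j - Stilde) * (α j - αtilde j))
      ≤ ∑ j, q j * (α j - Stilde) ^ 2 :=
    sum_le_sum fun j _ =>
      mul_le_mul_of_nonneg_left (sq_add_two_mul_sub_le_sq _ _ _) (hq_pos j).le
  have hmin := sum_mul_sq_sub_mean_le (x := α) hq_sum S₀
  rw [← hStilde] at hmin
  linarith

/-- Not every agent can strictly improve by faking beliefs: in the beauty-contest
equilibrium with professed beliefs `α̃ⱼ = (1-pⱼ)αⱼ + pⱼ S̃₀`, weights
`qⱼ ∝ pⱼ(1-pⱼ)` summing to one, `S̃₀ = Σ qⱼαⱼ` and `S₀ = Σ pⱼαⱼ`, it cannot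
hold for every `j` that `(αⱼ - S₀)² < (α̃ⱼ - S̃₀)² + 2(α̃ⱼ - S̃₀)(αⱼ - α̃ⱼ)`. -/
theorem not_all_agents_improve
    (J : ℕ) (hJ : 2 ≤ J) (p α αtilde q : Fin J → ℝ)
    (hp : ∀ j, p j ∈ Set.Ioo (0:ℝ) 1) (hpsum : ∑ j, p j = 1)
    (hq : ∀ j, q j = p j * (1 - p j) / ∑ i, p i * (1 - p i))
    (Stilde S₀ : ℝ)
    (hStilde : Stilde = ∑ j, q j * α j)
    (hαtilde : ∀ j, αtilde j = (1 - p j) * α j + p j * Stilde)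
    (hS₀ : S₀ = ∑ j, p j * α j) :
    ¬ ∀ j, (α j - S₀)^2
        < (αtilde j - Stilde)^2 + 2 * (αtilde j - Stilde) * (α j - αtilde j) :=
  not_all_agents_improve_general J hJ p α αtilde q hp hq Stilde S₀ hStilde
end

section
/- Let U: (0,∞) → ℝ be strictly concave and differentiable, and let λ_t > 0 for t = 0,…,T. Suppose (θ̄, c̄) with c̄_t > 0 satisfies the wealth equation θ̄_t(S_t + δ_t) = θ̄_{t+1}S_t + c̄_t (with S_T = θ̄_{T+1} = 0, θ̄₀ = y), together with the first-order condition λ_t S_t = E[λ_{t+1}(S_{t+1} + δ_{t+1}) | 𝒢_t] where λ_t = U'(c̄_t) and θ̄ is 𝒢-previsible. Then for any other 𝒢-previsible θ with θ₀ = y and associated consumption c_t = θ_t(S_t + δ_t) - θ_{t+1}S_t > 0, one has E[Σ_{t=0}^T U(c_t)] ≤ E[Σ_{t=0}^T U(c̄_t)]. -/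
open MeasureTheory Finset

/-! Concavity gives `U(c_t) - U(c̄_t) ≤ λ_t (c_t - c̄_t)`, and by the wealth equations and
summation by parts these bounds add up to the gains `Σ_s (θ - θ̄)_{s+1} D_s` of the previsible
position `θ - θ̄` against `D_s = λ_{s+1}(S_{s+1} + δ_{s+1}) - λ_s S_s`, which has zero
`𝒢_s`-conditional mean by the first-order condition. As `θ` need not be integrable, neither are
these gains; instead the last increment is removed by conditioning on `𝒢_s`, after localising on
the `𝒢_s`-measurable sets where the position and the earlier gains are bounded. -/

theorem ConcaveOn.le_add_mul_sub_of_hasDerivAt {S : Set ℝ} {f : ℝ → ℝ} {f' x y : ℝ}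
    (hf : ConcaveOn ℝ S f) (hx : x ∈ S) (hy : y ∈ S) (hf' : HasDerivAt f f' x) :
    f y ≤ f x + f' * (y - x) := by
  rcases lt_trichotomy x y with hxy | rfl | hxy
  · have h := hf.slope_le_of_hasDerivAt hx hy hxy hf'
    rw [slope_def_field, div_le_iff₀ (sub_pos.2 hxy)] at h
    linarith
  · simp
  · have h := hf.le_slope_of_hasDerivAt hy hx hxy hf'
    rw [slope_def_field, le_div_iff₀ (sub_pos.2 hxy)] at h
    linarith

theorem sum_range_succ_mul_sub_shift {R : Type*} [CommRing R] (a b A S : ℕ → R) (T : ℕ) :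
    ∑ t ∈ range (T + 1), a t * (b t * A t - b (t + 1) * S t)
      = ∑ s ∈ range T, b (s + 1) * (a (s + 1) * A (s + 1) - a s * S s)
        + a 0 * b 0 * A 0 - a T * b (T + 1) * S T := by
  induction T with
  | zero => rw [sum_range_one, sum_range_zero]; ring
  | succ T ih => rw [sum_range_succ, ih, sum_range_succ]; ring

theorem sum_utility_sub_le_sum_gains {U U' : ℝ → ℝ} (hU : ConcaveOn ℝ (Set.Ioi 0) U)
    (hU' : ∀ x ∈ Set.Ioi (0 : ℝ), HasDerivAt U (U' x) x) {T : ℕ}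
    {S δ θ θbar c cbar lam : ℕ → ℝ} (hST : S T = 0) (hθ0 : θ 0 = θbar 0)
    (hc : ∀ t ≤ T, c t = θ t * (S t + δ t) - θ (t + 1) * S t)
    (hcbar : ∀ t ≤ T, cbar t = θbar t * (S t + δ t) - θbar (t + 1) * S t)
    (hcpos : ∀ t, 0 < c t) (hcbarpos : ∀ t, 0 < cbar t) (hlam : ∀ t, lam t = U' (cbar t)) :
    ∑ t ∈ range (T + 1), (U (c t) - U (cbar t))
      ≤ ∑ s ∈ range T, (θ (s + 1) - θbar (s + 1))
          * (lam (s + 1) * (S (s + 1) + δ (s + 1)) - lam s * S s) := by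
  calc ∑ t ∈ range (T + 1), (U (c t) - U (cbar t))
      ≤ ∑ t ∈ range (T + 1), lam t
          * ((θ t - θbar t) * (S t + δ t) - (θ (t + 1) - θbar (t + 1)) * S t) := by
        refine sum_le_sum fun t ht => ?_
        have ht : t ≤ T := Nat.lt_succ_iff.1 (mem_range.1 ht)
        have htangent := hU.le_add_mul_sub_of_hasDerivAt (hcbarpos t) (hcpos t)
          (hU' _ (hcbarpos t))
        rw [← hlam, hc t ht, hcbar t ht] at htangent
        rw [hc t ht, hcbar t ht]
        linarith
    _ = _ := by simp [sum_range_succ_mul_sub_shift, hST, hθ0]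

section CondExp

variable {Ω : Type*} {m mΩ : MeasurableSpace Ω} {μ : Measure Ω}

theorem condExp_sub_ae_eq_zero_of_ae_eq_condExp (hm : m ≤ mΩ) [SigmaFinite (μ.trim hm)]
    {X M : Ω → ℝ} (hX : Integrable X μ) (hM : M =ᵐ[μ] μ[X | m]) : μ[X - M | m] =ᵐ[μ] 0 := by
  filter_upwards [condExp_sub hX (integrable_condExp.congr hM.symm) m,
    condExp_congr_ae (m := m) hM, condExp_condExp_of_le (f := X) le_rfl hm] with ω hsub hcongr hidem
  simp [hsub, hcongr, hidem]

theorem condExp_le_of_le_add_mul_of_integrable (hm : m ≤ mΩ) [SigmaFinite (μ.trim hm)]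
    {Z G Γ W : Ω → ℝ} (hZ : Integrable Z μ) (hG : Integrable G μ) (hW : Integrable W μ)
    (hΓW : Integrable (Γ * W) μ) (hGm : StronglyMeasurable[m] G)
    (hΓm : StronglyMeasurable[m] Γ)
    (hWcond : μ[W | m] =ᵐ[μ] 0) (hle : Z ≤ᵐ[μ] G + Γ * W) :
    μ[Z | m] ≤ᵐ[μ] G := by
  have hrhs : μ[G + Γ * W | m] =ᵐ[μ] G := by
    filter_upwards [condExp_add hG hΓW m, condExp_mul_of_stronglyMeasurable_left hΓm hΓW hW,
      hWcond] with ω hadd hmul hzero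
    simp [hadd, hmul, hzero, condExp_of_stronglyMeasurable hm hGm hG]
  exact (condExp_mono hZ (hG.add hΓW) hle).trans_eq hrhs

theorem condExp_le_of_le_add_mul [IsFiniteMeasure μ] (hm : m ≤ mΩ) {Z G Γ W : Ω → ℝ}
    (hZ : Integrable Z μ) (hW : Integrable W μ) (hGm : StronglyMeasurable[m] G)
    (hΓm : StronglyMeasurable[m] Γ) (hWcond : μ[W | m] =ᵐ[μ] 0) (hle : Z ≤ᵐ[μ] G + Γ * W) :
    μ[Z | m] ≤ᵐ[μ] G := by
  let s : ℕ → Set Ω := fun n => {ω | ‖G ω‖ ≤ n} ∩ {ω | ‖Γ ω‖ ≤ n}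
  have hs : ∀ n, MeasurableSet[m] (s n) := fun n =>
    (hGm.norm.measurable measurableSet_Iic).inter (hΓm.norm.measurable measurableSet_Iic)
  have hbdd : ∀ n (f : Ω → ℝ), (∀ ω ∈ s n, ‖f ω‖ ≤ n) → ∀ ω, ‖(s n).indicator f ω‖ ≤ n :=
    fun n f hf ω => by
      by_cases h : ω ∈ s n
      · rw [Set.indicator_of_mem h]; exact hf ω h
      · simp [h]
  have hloc : ∀ n, (s n).indicator (μ[Z | m]) ≤ᵐ[μ] (s n).indicator G := fun n => by
    have hGn := hbdd n G fun ω h => h.1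
    have hΓn := hbdd n Γ fun ω h => h.2
    refine (condExp_indicator hZ (hs n)).symm.trans_le
      (condExp_le_of_le_add_mul_of_integrable hm (hZ.indicator (hm _ (hs n)))
        (.of_bound ((hGm.indicator (hs n)).mono hm).aestronglyMeasurable n (.of_forall hGn))
        hW (hW.bdd_mul ((hΓm.indicator (hs n)).mono hm).aestronglyMeasurable
          (.of_forall hΓn))
        (hGm.indicator (hs n)) (hΓm.indicator (hs n)) hWcond ?_)
    filter_upwards [hle] with ω hω
    by_cases h : ω ∈ s n
    · simpa [h] using hω
    · simp [h]
  filter_upwards [ae_all_iff.2 hloc] with ω hω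
  obtain ⟨n, hn⟩ : ∃ n : ℕ, ω ∈ s n :=
    ⟨⌈max ‖G ω‖ ‖Γ ω‖⌉₊, show ‖G ω‖ ≤ _ from (le_max_left _ _).trans (Nat.le_ceil _),
      show ‖Γ ω‖ ≤ _ from (le_max_right _ _).trans (Nat.le_ceil _)⟩
  simpa [Set.indicator_of_mem hn] using hω n

theorem integral_nonpos_of_ae_le_martingaleTransform [IsFiniteMeasure μ]
    (𝒢 : Filtration ℕ mΩ) {H D : ℕ → Ω → ℝ} (n : ℕ)
    (hH : ∀ s < n, StronglyMeasurable[𝒢 s] (H s))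
    (hD : ∀ s < n, StronglyMeasurable[𝒢 (s + 1)] (D s))
    (hDint : ∀ s < n, Integrable (D s) μ) (hDcond : ∀ s < n, μ[D s | 𝒢 s] =ᵐ[μ] 0)
    {Y : Ω → ℝ} (hY : Integrable Y μ)
    (hle : Y ≤ᵐ[μ] fun ω => ∑ s ∈ range n, H s ω * D s ω) :
    ∫ ω, Y ω ∂μ ≤ 0 := by
  induction n generalizing Y with
  | zero => exact integral_nonpos_of_ae (by simpa [Pi.zero_def] using hle)
  | succ n ih =>
    have hsum : StronglyMeasurable[𝒢 n] fun ω => ∑ s ∈ range n, H s ω * D s ω :=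
      Finset.stronglyMeasurable_fun_sum _ fun s hs => by
        have hsn : s < n := mem_range.1 hs
        exact ((hH s (by omega)).mono (𝒢.mono hsn.le)).mul
          ((hD s (by omega)).mono (𝒢.mono hsn))
    have hcond := condExp_le_of_le_add_mul (𝒢.le n) hY (hDint n n.lt_succ_self) hsum
      (hH n n.lt_succ_self) (hDcond n n.lt_succ_self)
      (hle.trans_eq (.of_forall fun ω => by simp [sum_range_succ]))
    rw [← integral_condExp (𝒢.le n)]
    exact ih (fun s hs => hH s (by omega)) (fun s hs => hD s (by omega))
      (fun s hs => hDint s (by omega)) (fun s hs => hDcond s (by omega)) integrable_condExp hcond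

end CondExp

theorem discrete_time_optimality_general
    {Ω : Type*} {mΩ : MeasurableSpace Ω} {μ : Measure Ω} [IsProbabilityMeasure μ]
    (T : ℕ) (𝒢 : Filtration ℕ mΩ)
    (S δ : ℕ → Ω → ℝ) (hSad : Adapted 𝒢 S) (hδad : Adapted 𝒢 δ)
    (hST : ∀ ω, S T ω = 0)
    (U U' : ℝ → ℝ) (hU : StrictConcaveOn ℝ (Set.Ioi 0) U)
    (hU' : ∀ x ∈ Set.Ioi (0:ℝ), HasDerivAt U (U' x) x)
    (y : ℝ)
    -- the candidate optimal plan
    (θbar cbar : ℕ → Ω → ℝ) (hcbarpos : ∀ t ω, 0 < cbar t ω)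
    (hθbarprev : ∀ t, StronglyMeasurable[𝒢 t] (θbar (t+1)))
    (hθbar0 : ∀ ω, θbar 0 ω = y)
    (hwealthbar : ∀ t ≤ T, ∀ ω,
      θbar t ω * (S t ω + δ t ω) = θbar (t+1) ω * S t ω + cbar t ω)
    -- λ_t = U'(c̄_t) > 0 and the first-order condition
    (lam : ℕ → Ω → ℝ) (hlam : ∀ t ω, lam t ω = U' (cbar t ω))
    (hFOC : ∀ t < T,
      (fun ω => lam t ω * S t ω)
        =ᵐ[μ] μ[fun ω => lam (t+1) ω * (S (t+1) ω + δ (t+1) ω) | 𝒢 t])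
    -- an arbitrary competing previsible self-financing plan
    (θ c : ℕ → Ω → ℝ)
    (hθprev : ∀ t, StronglyMeasurable[𝒢 t] (θ (t+1)))
    (hθ0 : ∀ ω, θ 0 ω = y)
    (hc : ∀ t ≤ T, ∀ ω, c t ω = θ t ω * (S t ω + δ t ω) - θ (t+1) ω * S t ω)
    (hcpos : ∀ t ω, 0 < c t ω)
    -- integrability so that the objectives are well defined
    (hintc : ∀ t, Integrable (fun ω => U (c t ω)) μ)
    (hintcbar : ∀ t, Integrable (fun ω => U (cbar t ω)) μ)
    (hintprod : ∀ t, Integrable (fun ω => lam t ω * (S t ω + δ t ω)) μ) :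
    (∫ ω, ∑ t ∈ Finset.range (T+1), U (c t ω) ∂μ)
      ≤ ∫ ω, ∑ t ∈ Finset.range (T+1), U (cbar t ω) ∂μ := by
  have hcbar : ∀ t ≤ T, cbar t = θbar t * (S t + δ t) - θbar (t + 1) * S t := fun t ht =>
    funext fun ω => by
      simp only [Pi.sub_apply, Pi.mul_apply, Pi.add_apply, hwealthbar t ht ω]; ring
  have hθbar : StronglyAdapted 𝒢 θbar
    | 0 => by rw [show θbar 0 = fun _ => y from funext hθbar0]; exact stronglyMeasurable_const
    | t + 1 => (hθbarprev t).mono (𝒢.mono t.le_succ)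
  -- `lam t = deriv U ∘ cbar t` makes `lam` adapted without any measurability of `U'`
  have hlamm : ∀ t ≤ T, StronglyMeasurable[𝒢 t] (lam t) := fun t ht => by
    rw [show lam t = deriv U ∘ cbar t from
      funext fun ω => (hlam t ω).trans (hU' _ (hcbarpos t ω)).deriv.symm, hcbar t ht]
    exact ((measurable_deriv U).comp
      (((hθbar t).mul ((hSad t).add (hδad t)).stronglyMeasurable).sub
        ((hθbarprev t).mul (hSad t).stronglyMeasurable)).measurable).stronglyMeasurable
  have hgap : ∫ ω, ∑ t ∈ range (T + 1), (U (c t ω) - U (cbar t ω)) ∂μ ≤ 0 :=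
    integral_nonpos_of_ae_le_martingaleTransform 𝒢 T
      (fun s _ => (hθprev s).sub (hθbarprev s))
      (fun s hs => ((hlamm (s + 1) hs).mul ((hSad _).add (hδad _)).stronglyMeasurable).sub
        (((hlamm s hs.le).mul (hSad s).stronglyMeasurable).mono (𝒢.mono s.le_succ)))
      (fun s hs => (hintprod (s + 1)).sub (integrable_condExp.congr (hFOC s hs).symm))
      (fun s hs => condExp_sub_ae_eq_zero_of_ae_eq_condExp (𝒢.le s) (hintprod (s + 1))
        (hFOC s hs))
      (integrable_finsetSum _ fun t _ => (hintc t).sub (hintcbar t))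
      (.of_forall fun ω => sum_utility_sub_le_sum_gains hU.concaveOn hU' (hST ω)
        ((hθ0 ω).trans (hθbar0 ω).symm) (fun t ht => hc t ht ω)
        (fun t ht => congrFun (hcbar t ht) ω) (hcpos · ω) (hcbarpos · ω) (hlam · ω))
  simp only [sum_sub_distrib] at hgap
  rw [integral_sub (integrable_finsetSum _ fun t _ => hintc t)
    (integrable_finsetSum _ fun t _ => hintcbar t)] at hgap
  linarith

/-- Verification of optimality (step (vi) of the proof of Theorem 2.1): if the
candidate plan `(θ̄, c̄)` satisfies the wealth equation and the first-order
(martingale) condition `λ_t S_t = E[λ_{t+1}(S_{t+1} + δ_{t+1}) | 𝒢_t]` with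
`λ_t = U'(c̄_t) > 0`, then `(θ̄, c̄)` dominates any other previsible
self-financing plan `(θ, c)` with the same initial holding `y` for the
objective `E[Σ_{t=0}^T U(c_t)]`. -/
theorem discrete_time_optimality
    {Ω : Type*} {mΩ : MeasurableSpace Ω} {μ : Measure Ω} [IsProbabilityMeasure μ]
    (T : ℕ) (𝒢 : Filtration ℕ mΩ)
    (S δ : ℕ → Ω → ℝ) (hSad : Adapted 𝒢 S) (hδad : Adapted 𝒢 δ)
    (hδpos : ∀ t ω, 0 < δ t ω) (hST : ∀ ω, S T ω = 0)
    (U U' : ℝ → ℝ) (hU : StrictConcaveOn ℝ (Set.Ioi 0) U)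
    (hU' : ∀ x ∈ Set.Ioi (0:ℝ), HasDerivAt U (U' x) x)
    (y : ℝ)
    -- the candidate optimal plan
    (θbar cbar : ℕ → Ω → ℝ) (hcbarpos : ∀ t ω, 0 < cbar t ω)
    (hθbarprev : ∀ t, StronglyMeasurable[𝒢 t] (θbar (t+1)))
    (hθbar0 : ∀ ω, θbar 0 ω = y) (hθbarT : ∀ ω, θbar (T+1) ω = 0)
    (hwealthbar : ∀ t ≤ T, ∀ ω,
      θbar t ω * (S t ω + δ t ω) = θbar (t+1) ω * S t ω + cbar t ω)
    -- λ_t = U'(c̄_t) > 0 and the first-order condition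
    (lam : ℕ → Ω → ℝ) (hlam : ∀ t ω, lam t ω = U' (cbar t ω))
    (hlampos : ∀ t ω, 0 < lam t ω)
    (hFOC : ∀ t < T,
      (fun ω => lam t ω * S t ω)
        =ᵐ[μ] μ[fun ω => lam (t+1) ω * (S (t+1) ω + δ (t+1) ω) | 𝒢 t])
    -- an arbitrary competing previsible self-financing plan
    (θ c : ℕ → Ω → ℝ)
    (hθprev : ∀ t, StronglyMeasurable[𝒢 t] (θ (t+1)))
    (hθ0 : ∀ ω, θ 0 ω = y) (hθT : ∀ ω, θ (T+1) ω = 0)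
    (hc : ∀ t ≤ T, ∀ ω, c t ω = θ t ω * (S t ω + δ t ω) - θ (t+1) ω * S t ω)
    (hcpos : ∀ t ω, 0 < c t ω)
    -- integrability so that the objectives are well defined
    (hintc : ∀ t, Integrable (fun ω => U (c t ω)) μ)
    (hintcbar : ∀ t, Integrable (fun ω => U (cbar t ω)) μ)
    (hintprod : ∀ t, Integrable (fun ω => lam t ω * (S t ω + δ t ω)) μ) :
    (∫ ω, ∑ t ∈ Finset.range (T+1), U (c t ω) ∂μ)
      ≤ ∫ ω, ∑ t ∈ Finset.range (T+1), U (cbar t ω) ∂μ :=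
  discrete_time_optimality_general T 𝒢 S δ hSad hδad hST U U' hU hU' y θbar cbar hcbarpos hθbarprev
    hθbar0 hwealthbar lam hlam hFOC θ c hθprev hθ0 hc hcpos hintc hintcbar hintprod
end
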